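/- arXiv:1503.04035 — 2 statements merged into one kernel-verified Lean document; each statement's English description precedes it below -/
import Mathlib

section
/- Let D_n = dim 𝒢_n denote the dimension of the kernel of H_n(ψ₁,…,ψ_{n−1}), with the convention D₁ = 2. Then D_n > D_{n−1} for every n ≥ 2. -/
open scoped BigOperators
open Matrix Polynomial

noncomputable section

/-- A two-site operator `A` applied to qubits `i` and `j` of an `n`-qubit chain,
acting as the identity on the remaining qubits. -/
def twoSite (n : ℕ) (A : Matrix (Fin 2 × Fin 2) (Fin 2 × Fin 2) ℂ) (i j : Fin n) :
    Matrix (Fin n → Fin 2) (Fin n → Fin 2) ℂ :=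
  fun x y => A (x i, x j) (y i, y j) *
    ∏ k : Fin n, if k = i ∨ k = j then 1 else (if x k = y k then 1 else 0)

/-- The rank-one projector `|ψ⟩⟨ψ|` onto a two-qubit state `ψ`. -/
def vecProj (ψ : Fin 2 × Fin 2 → ℂ) : Matrix (Fin 2 × Fin 2) (Fin 2 × Fin 2) ℂ :=
  fun a b => ψ a * star (ψ b)

/-- Open-boundary chain Hamiltonian with (possibly) site-dependent forbidden states:
`H_n(ψ₁,…,ψ_{n-1}) = Σ_j |ψ_j⟩⟨ψ_j|_{j,j+1}` (here `ψs` is 0-indexed). -/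
def HnGen (n : ℕ) (ψs : ℕ → Fin 2 × Fin 2 → ℂ) :
    Matrix (Fin n → Fin 2) (Fin n → Fin 2) ℂ :=
  ∑ i : Fin n,
    if h : (i : ℕ) + 1 < n then twoSite n (vecProj (ψs (i : ℕ))) i ⟨(i : ℕ) + 1, h⟩ else 0

/-- Translation-invariant open-boundary Hamiltonian `H_n(ψ)`. -/
def Hn (n : ℕ) (ψ : Fin 2 × Fin 2 → ℂ) : Matrix (Fin n → Fin 2) (Fin n → Fin 2) ℂ :=
  HnGen n fun _ => ψ

-- constraint functional
def cns {n : ℕ} (ψ : Fin 2 × Fin 2 → ℂ) (i j : Fin n) (v : (Fin n → Fin 2) → ℂ)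
    (x : Fin n → Fin 2) : ℂ :=
  ∑ a : Fin 2, ∑ b : Fin 2, star (ψ (a, b)) * v (Function.update (Function.update x i a) j b)

def Kspace (ψs : ℕ → Fin 2 × Fin 2 → ℂ) (n : ℕ) : Submodule ℂ ((Fin n → Fin 2) → ℂ) where
  carrier := {v | ∀ (j : ℕ) (h : j + 1 < n) (x : Fin n → Fin 2),
    cns (ψs j) ⟨j, Nat.lt_of_succ_lt h⟩ ⟨j + 1, h⟩ v x = 0}
  add_mem' := by
    intro u w hu hw j h x
    have hu' := hu j h x
    have hw' := hw j h x
    simp only [cns, Pi.add_apply, mul_add, Finset.sum_add_distrib] at hu' hw' ⊢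
    rw [hu', hw', add_zero]
  zero_mem' := by
    intro j h x
    simp [cns]
  smul_mem' := by
    intro c v hv j h x
    have := hv j h x
    simp only [cns, Pi.smul_apply, smul_eq_mul] at *
    calc ∑ a : Fin 2, ∑ b : Fin 2, star (ψs j (a,b)) * (c * v _) 
        = c * ∑ a : Fin 2, ∑ b : Fin 2, star (ψs j (a,b)) * v _ := by
          rw [Finset.mul_sum]; congr 1; funext a; rw [Finset.mul_sum]; congr 1; funext b; ring
      _ = 0 := by rw [this, mul_zero]

lemma prod_delta {n : ℕ} (i j : Fin n) (x y : Fin n → Fin 2) :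
    (∏ k : Fin n, if k = i ∨ k = j then 1 else (if x k = y k then (1:ℂ) else 0)) =
      if ∀ k, k ≠ i → k ≠ j → x k = y k then 1 else 0 := by
  by_cases h : ∀ k, k ≠ i → k ≠ j → x k = y k
  · rw [if_pos h]
    apply Finset.prod_eq_one
    intro k _
    by_cases hk : k = i ∨ k = j
    · rw [if_pos hk]
    · push_neg at hk
      rw [if_neg (by tauto), if_pos (h k hk.1 hk.2)]
  · rw [if_neg h]
    push_neg at h
    obtain ⟨k, hki, hkj, hxy⟩ := h
    apply Finset.prod_eq_zero (Finset.mem_univ k)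
    rw [if_neg (by tauto), if_neg hxy]

lemma twoSite_mulVec {n : ℕ} (A : Matrix (Fin 2 × Fin 2) (Fin 2 × Fin 2) ℂ) (i j : Fin n)
    (hij : i ≠ j) (v : (Fin n → Fin 2) → ℂ) (x : Fin n → Fin 2) :
    (twoSite n A i j).mulVec v x =
      ∑ a : Fin 2, ∑ b : Fin 2, A (x i, x j) (a, b) *
        v (Function.update (Function.update x i a) j b) := by
  have upd_i : ∀ (a b : Fin 2), (Function.update (Function.update x i a) j b) i = a := by
    intro a b; rw [Function.update_of_ne hij, Function.update_self]
  have upd_j : ∀ (a b : Fin 2), (Function.update (Function.update x i a) j b) j = b := by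
    intro a b; rw [Function.update_self]
  have upd_k : ∀ (a b : Fin 2) (k : Fin n), k ≠ i → k ≠ j →
      (Function.update (Function.update x i a) j b) k = x k := by
    intro a b k hki hkj; rw [Function.update_of_ne hkj, Function.update_of_ne hki]
  have lhs : (twoSite n A i j).mulVec v x
      = ∑ y ∈ Finset.univ.filter (fun y => ∀ k, k ≠ i → k ≠ j → x k = y k),
          A (x i, x j) (y i, y j) * v y := by
    rw [Finset.sum_filter]
    show (∑ y : Fin n → Fin 2, twoSite n A i j x y * v y) = _
    refine Finset.sum_congr rfl fun y _ => ?_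
    unfold twoSite
    rw [prod_delta i j x y]
    split <;> ring
  have rhs : (∑ a : Fin 2, ∑ b : Fin 2, A (x i, x j) (a, b) *
        v (Function.update (Function.update x i a) j b))
      = ∑ p : Fin 2 × Fin 2, A (x i, x j) p *
        v (Function.update (Function.update x i p.1) j p.2) :=
    by exact (Fintype.sum_prod_type (f := fun p : Fin 2 × Fin 2 => A (x i, x j) p *
        v (Function.update (Function.update x i p.1) j p.2))).symm
  rw [lhs, rhs]
  refine Finset.sum_nbij' (fun y => (y i, y j))
    (fun p => Function.update (Function.update x i p.1) j p.2) ?_ ?_ ?_ ?_ ?_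
  · intro a _; exact Finset.mem_univ _
  · intro p _
    simp only [Finset.mem_filter, Finset.mem_univ, true_and]
    intro k hki hkj
    exact (upd_k p.1 p.2 k hki hkj).symm
  · intro y hy
    simp only [Finset.mem_filter, Finset.mem_univ, true_and] at hy
    dsimp only
    funext k
    by_cases hki : k = i
    · subst hki; rw [upd_i]
    · by_cases hkj : k = j
      · subst hkj; rw [upd_j]
      · rw [upd_k _ _ k hki hkj, hy k hki hkj]
  · intro p _; ext <;> simp [upd_i, upd_j]
  · intro y hy
    simp only [Finset.mem_filter, Finset.mem_univ, true_and] at hy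
    dsimp only
    have : Function.update (Function.update x i (y i)) j (y j) = y := by
      funext k
      by_cases hki : k = i
      · subst hki; rw [upd_i]
      · by_cases hkj : k = j
        · subst hkj; rw [upd_j]
        · rw [upd_k _ _ k hki hkj, hy k hki hkj]
    rw [this]

lemma twoSite_conjTranspose {n : ℕ} (A : Matrix (Fin 2 × Fin 2) (Fin 2 × Fin 2) ℂ)
    (i j : Fin n) : (twoSite n A i j)ᴴ = twoSite n Aᴴ i j := by
  ext x y
  rw [Matrix.conjTranspose_apply]
  unfold twoSite
  rw [star_mul', ← Matrix.conjTranspose_apply]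
  congr 1
  rw [star_prod]
  refine Finset.prod_congr rfl fun k _ => ?_
  by_cases hk : k = i ∨ k = j
  · simp [hk]
  · simp only [if_neg hk]
    by_cases hxy : x k = y k
    · rw [if_pos hxy.symm, if_pos hxy, star_one]
    · have h2 : ¬ y k = x k := fun h => hxy h.symm
      rw [if_neg h2, if_neg hxy, star_zero]

lemma twoSite_mul {n : ℕ} (A B : Matrix (Fin 2 × Fin 2) (Fin 2 × Fin 2) ℂ) (i j : Fin n)
    (hij : i ≠ j) : twoSite n A i j * twoSite n B i j = twoSite n (A * B) i j := by
  ext x y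
  have h0 : (twoSite n A i j * twoSite n B i j) x y
      = (twoSite n A i j).mulVec (fun z => twoSite n B i j z y) x := by
    rw [Matrix.mul_apply]; rfl
  rw [h0, twoSite_mulVec A i j hij]
  have hupd : ∀ a b : Fin 2,
      twoSite n B i j (Function.update (Function.update x i a) j b) y
        = B (a, b) (y i, y j) * (if ∀ k, k ≠ i → k ≠ j → x k = y k then 1 else 0) := by
    intro a b
    unfold twoSite
    rw [prod_delta i j _ y]
    have e1 : (Function.update (Function.update x i a) j b) i = a := by
      rw [Function.update_of_ne hij, Function.update_self]
    have e2 : (Function.update (Function.update x i a) j b) j = b := Function.update_self _ _ _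
    rw [e1, e2]
    congr 1
    by_cases h : ∀ k, k ≠ i → k ≠ j → x k = y k
    · rw [if_pos h, if_pos]
      intro k hki hkj
      rw [Function.update_of_ne hkj, Function.update_of_ne hki]
      exact h k hki hkj
    · rw [if_neg h, if_neg]
      intro hc
      exact h fun k hki hkj => by
        have := hc k hki hkj
        rwa [Function.update_of_ne hkj, Function.update_of_ne hki] at this
  have hrhs : twoSite n (A * B) i j x y
      = ((A * B) (x i, x j) (y i, y j)) * (if ∀ k, k ≠ i → k ≠ j → x k = y k then 1 else 0) := by
    unfold twoSite; rw [prod_delta]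
  simp_rw [hupd]
  rw [hrhs, Matrix.mul_apply, Finset.sum_mul, Fintype.sum_prod_type]
  refine Finset.sum_congr rfl fun a _ => Finset.sum_congr rfl fun b _ => by ring

def Bmat (ψ : Fin 2 × Fin 2 → ℂ) : Matrix (Fin 2 × Fin 2) (Fin 2 × Fin 2) ℂ :=
  fun p q => if p = ((0 : Fin 2), (0 : Fin 2)) then star (ψ q) else 0

lemma vecProj_factor (ψ : Fin 2 × Fin 2 → ℂ) : vecProj ψ = (Bmat ψ)ᴴ * Bmat ψ := by
  ext p q
  rw [Matrix.mul_apply]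
  have : ∀ r : Fin 2 × Fin 2, (Bmat ψ)ᴴ p r * Bmat ψ r q
      = if r = ((0 : Fin 2), (0 : Fin 2)) then ψ p * star (ψ q) else 0 := by
    intro r
    rw [Matrix.conjTranspose_apply]
    unfold Bmat
    by_cases h : r = ((0 : Fin 2), (0 : Fin 2))
    · rw [if_pos h, if_pos h, if_pos h, star_star]
    · rw [if_neg h, if_neg h, if_neg h, star_zero, zero_mul]
  simp_rw [this]
  rw [Finset.sum_ite_eq' Finset.univ]
  simp [vecProj]

lemma sum_mulVec {ι : Type*} (s : Finset ι) {m' : Type*} [Fintype m'] [DecidableEq m']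
    (M : ι → Matrix m' m' ℂ) (v : m' → ℂ) :
    (∑ i ∈ s, M i) *ᵥ v = ∑ i ∈ s, (M i *ᵥ v) := by
  funext x
  show ∑ y, (∑ i ∈ s, M i) x y * v y = (∑ i ∈ s, (M i *ᵥ v)) x
  simp only [Matrix.sum_apply, Finset.sum_apply, Finset.sum_mul]
  show ∑ y, ∑ i ∈ s, M i x y * v y = ∑ i ∈ s, ∑ y, M i x y * v y
  exact Finset.sum_comm

lemma dotProduct_sum' {ι : Type*} (s : Finset ι) {m' : Type*} [Fintype m']
    (u : m' → ℂ) (w : ι → m' → ℂ) : u ⬝ᵥ (∑ i ∈ s, w i) = ∑ i ∈ s, u ⬝ᵥ w i := by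
  show ∑ y, u y * (∑ i ∈ s, w i) y = ∑ i ∈ s, ∑ y, u y * w i y
  simp only [Finset.sum_apply, Finset.mul_sum]
  exact Finset.sum_comm

lemma upd_collapse {n : ℕ} {i j : Fin n} (hij : i ≠ j) (x : Fin n → Fin 2) (a b a' b' : Fin 2) :
    Function.update (Function.update (Function.update (Function.update x i a) j b) i a') j b'
      = Function.update (Function.update x i a') j b' := by
  funext k
  simp only [Function.update_apply]
  split_ifs <;> rfl

lemma cns_update {n : ℕ} (ψ : Fin 2 × Fin 2 → ℂ) {i j : Fin n} (hij : i ≠ j)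
    (v : (Fin n → Fin 2) → ℂ) (x : Fin n → Fin 2) (a b : Fin 2) :
    cns ψ i j v (Function.update (Function.update x i a) j b) = cns ψ i j v x := by
  unfold cns
  refine Finset.sum_congr rfl fun a' _ => Finset.sum_congr rfl fun b' _ => ?_
  rw [upd_collapse hij]

lemma proj_mulVec {n : ℕ} (ψ : Fin 2 × Fin 2 → ℂ) {i j : Fin n} (hij : i ≠ j)
    (v : (Fin n → Fin 2) → ℂ) (x : Fin n → Fin 2) :
    (twoSite n (vecProj ψ) i j *ᵥ v) x = ψ (x i, x j) * cns ψ i j v x := by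
  rw [twoSite_mulVec _ _ _ hij]
  unfold cns vecProj
  rw [Finset.mul_sum]
  refine Finset.sum_congr rfl fun a _ => ?_
  rw [Finset.mul_sum]
  exact Finset.sum_congr rfl fun b _ => by ring

lemma Bmat_mulVec {n : ℕ} (ψ : Fin 2 × Fin 2 → ℂ) {i j : Fin n} (hij : i ≠ j)
    (v : (Fin n → Fin 2) → ℂ) (x : Fin n → Fin 2) :
    (twoSite n (Bmat ψ) i j *ᵥ v) x
      = if (x i, x j) = ((0 : Fin 2), (0 : Fin 2)) then cns ψ i j v x else 0 := by
  rw [twoSite_mulVec _ _ _ hij]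
  unfold Bmat cns
  by_cases h : (x i, x j) = ((0 : Fin 2), (0 : Fin 2))
  · rw [if_pos h]
    exact Finset.sum_congr rfl fun a _ => Finset.sum_congr rfl fun b _ => by rw [if_pos h]
  · rw [if_neg h]
    refine Finset.sum_eq_zero fun a _ => Finset.sum_eq_zero fun b _ => ?_
    rw [if_neg h, zero_mul]

lemma fin_ne {n : ℕ} (i : Fin n) (h : (i : ℕ) + 1 < n) : i ≠ (⟨(i : ℕ) + 1, h⟩ : Fin n) := by
  intro e
  have := congrArg Fin.val e
  simp at this

lemma quad_zero (n : ℕ) (ψs : ℕ → Fin 2 × Fin 2 → ℂ) (v : (Fin n → Fin 2) → ℂ)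
    (hv : HnGen n ψs *ᵥ v = 0) (i : Fin n) (h' : (i : ℕ) + 1 < n) :
    (twoSite n (Bmat (ψs (i : ℕ))) i ⟨(i : ℕ) + 1, h'⟩ *ᵥ v) = 0 := by
  have hs2 : star v ⬝ᵥ (HnGen n ψs *ᵥ v) = ∑ k : Fin n, if hk : (k : ℕ) + 1 < n then
      ((∑ y, Complex.normSq ((twoSite n (Bmat (ψs (k : ℕ))) k ⟨(k : ℕ) + 1, hk⟩ *ᵥ v) y) : ℝ) : ℂ)
      else 0 := by
    unfold HnGen
    rw [sum_mulVec, dotProduct_sum']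
    refine Finset.sum_congr rfl fun k _ => ?_
    by_cases hk : (k : ℕ) + 1 < n
    · rw [dif_pos hk, dif_pos hk]
      have hij : k ≠ (⟨(k : ℕ) + 1, hk⟩ : Fin n) := fin_ne k hk
      rw [vecProj_factor, ← twoSite_mul _ _ _ _ hij, ← twoSite_conjTranspose,
          ← Matrix.mulVec_mulVec, Matrix.dotProduct_mulVec, ← Matrix.star_mulVec]
      show (∑ y, star ((twoSite n (Bmat (ψs (k:ℕ))) k ⟨(k:ℕ)+1, hk⟩ *ᵥ v) y) * _) = _
      rw [Complex.ofReal_sum]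
      refine Finset.sum_congr rfl fun y _ => ?_
      rw [Complex.normSq_eq_conj_mul_self]
      rfl
    · rw [dif_neg hk, dif_neg hk, Matrix.zero_mulVec, dotProduct_zero]
  have hsum : (∑ k : Fin n, if hk : (k : ℕ) + 1 < n then
      ((∑ y, Complex.normSq ((twoSite n (Bmat (ψs (k : ℕ))) k ⟨(k : ℕ) + 1, hk⟩ *ᵥ v) y) : ℝ) : ℂ)
      else 0) = 0 := by
    rw [← hs2, hv, dotProduct_zero]
  have hreal : ∑ k : Fin n, (if hk : (k : ℕ) + 1 < n then
      (∑ y, Complex.normSq ((twoSite n (Bmat (ψs (k : ℕ))) k ⟨(k : ℕ) + 1, hk⟩ *ᵥ v) y))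
      else 0 : ℝ) = 0 := by
    have h2 : ((∑ k : Fin n, (if hk : (k : ℕ) + 1 < n then
        (∑ y, Complex.normSq ((twoSite n (Bmat (ψs (k : ℕ))) k ⟨(k : ℕ) + 1, hk⟩ *ᵥ v) y))
        else 0 : ℝ) : ℝ) : ℂ) = 0 := by
      rw [Complex.ofReal_sum]
      simp only [apply_dite (Complex.ofReal : ℝ → ℂ), Complex.ofReal_zero]
      exact hsum
    exact_mod_cast h2
  have hterm := (Finset.sum_eq_zero_iff_of_nonneg (fun k _ => by
      by_cases hk : (k : ℕ) + 1 < n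
      · rw [dif_pos hk]
        exact Finset.sum_nonneg fun y _ => Complex.normSq_nonneg _
      · rw [dif_neg hk])).mp hreal i (Finset.mem_univ i)
  rw [dif_pos h'] at hterm
  have hy := (Finset.sum_eq_zero_iff_of_nonneg
      (fun y _ => Complex.normSq_nonneg _)).mp hterm
  funext y
  exact Complex.normSq_eq_zero.mp (hy y (Finset.mem_univ y))

lemma ker_eq_Kspace (n : ℕ) (ψs : ℕ → Fin 2 × Fin 2 → ℂ) :
    LinearMap.ker (HnGen n ψs).mulVecLin = Kspace ψs n := by
  ext v
  simp only [LinearMap.mem_ker, Matrix.mulVecLin_apply]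
  constructor
  · intro hv j h x
    have hij : (⟨j, Nat.lt_of_succ_lt h⟩ : Fin n) ≠ ⟨j + 1, h⟩ := by
      intro e; have := congrArg Fin.val e; simp at this
    have hw := congrFun (quad_zero n ψs v hv ⟨j, Nat.lt_of_succ_lt h⟩ h)
      (Function.update (Function.update x (⟨j, Nat.lt_of_succ_lt h⟩ : Fin n) 0) (⟨j+1, h⟩ : Fin n) 0)
    rw [Bmat_mulVec _ hij] at hw
    rw [Function.update_self, Function.update_of_ne hij, Function.update_self, if_pos rfl,
        cns_update _ hij] at hw
    exact hw
  · intro hv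
    unfold HnGen
    rw [sum_mulVec]
    refine Finset.sum_eq_zero fun i _ => ?_
    by_cases h : (i : ℕ) + 1 < n
    · rw [dif_pos h]
      funext x
      rw [proj_mulVec _ (fin_ne i h)]
      have hz := hv (i : ℕ) h x
      rw [show (⟨(i : ℕ), Nat.lt_of_succ_lt h⟩ : Fin n) = i from Fin.eta i _] at hz
      rw [hz, mul_zero]
      rfl
    · rw [dif_neg h, Matrix.zero_mulVec]

def combL (m : ℕ) : (((Fin (m+1) → Fin 2) → ℂ) × ((Fin (m+1) → Fin 2) → ℂ)) →ₗ[ℂ]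
    ((Fin (m+2) → Fin 2) → ℂ) where
  toFun p := fun x => if x (Fin.last (m+1)) = 0 then p.1 (Fin.init x) else p.2 (Fin.init x)
  map_add' p q := by
    funext x
    by_cases h : x (Fin.last (m+1)) = 0 <;> simp [h]
  map_smul' c p := by
    funext x
    by_cases h : x (Fin.last (m+1)) = 0 <;> simp [h]

@[simp] lemma combL_apply (m : ℕ) (p) (x : Fin (m+2) → Fin 2) :
    combL m p x = if x (Fin.last (m+1)) = 0 then p.1 (Fin.init x) else p.2 (Fin.init x) := rfl

def PhiL (ψs : ℕ → Fin 2 × Fin 2 → ℂ) (m : ℕ) :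
    (((Fin (m+1) → Fin 2) → ℂ) × ((Fin (m+1) → Fin 2) → ℂ)) →ₗ[ℂ]
    ((Fin m → Fin 2) → ℂ) where
  toFun p := fun z => ∑ a : Fin 2, ∑ b : Fin 2, star (ψs m (a, b)) *
      (if b = 0 then p.1 (Fin.snoc z a) else p.2 (Fin.snoc z a))
  map_add' p q := by
    funext z
    simp only [Prod.fst_add, Prod.snd_add, Pi.add_apply]
    rw [← Finset.sum_add_distrib]
    refine Finset.sum_congr rfl fun a _ => ?_
    rw [← Finset.sum_add_distrib]
    refine Finset.sum_congr rfl fun b _ => ?_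
    split_ifs <;> ring
  map_smul' c p := by
    funext z
    simp only [Prod.smul_fst, Prod.smul_snd, Pi.smul_apply, smul_eq_mul, RingHom.id_apply]
    rw [Finset.mul_sum]
    refine Finset.sum_congr rfl fun a _ => ?_
    rw [Finset.mul_sum]
    refine Finset.sum_congr rfl fun b _ => ?_
    split_ifs <;> ring

@[simp] lemma PhiL_apply (ψs : ℕ → Fin 2 × Fin 2 → ℂ) (m : ℕ) (p) (z : Fin m → Fin 2) :
    PhiL ψs m p z = ∑ a : Fin 2, ∑ b : Fin 2, star (ψs m (a, b)) *
      (if b = 0 then p.1 (Fin.snoc z a) else p.2 (Fin.snoc z a)) := rfl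

lemma update_last_eq_snoc {N : ℕ} (y : Fin (N+1) → Fin 2) (a : Fin 2) :
    Function.update y (Fin.last N) a = Fin.snoc (Fin.init y) a := by
  funext k
  cases k using Fin.lastCases with
  | last => rw [Function.update_self, Fin.snoc_last]
  | cast i =>
    rw [Function.update_of_ne (Fin.castSucc_lt_last i).ne, Fin.snoc_castSucc]
    rfl

lemma combL_inj (m : ℕ) : Function.Injective (combL m) := by
  intro p q h
  have h1 : p.1 = q.1 := by
    funext y
    have := congrFun h (Fin.snoc y (0 : Fin 2))
    simpa [Fin.snoc_last, Fin.init_snoc] using this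
  have h2 : p.2 = q.2 := by
    funext y
    have := congrFun h (Fin.snoc y (1 : Fin 2))
    have h10 : (1 : Fin 2) ≠ 0 := by decide
    simpa [Fin.snoc_last, Fin.init_snoc, h10] using this
  exact Prod.ext h1 h2

lemma sum4_comm (f : Fin 2 → Fin 2 → Fin 2 → Fin 2 → ℂ) :
    ∑ a, ∑ b, ∑ c, ∑ d, f a b c d = ∑ c, ∑ d, ∑ a, ∑ b, f a b c d := by
  have h1 : ∀ a, ∑ b, ∑ c, ∑ d : Fin 2, f a b c d = ∑ c, ∑ b, ∑ d, f a b c d :=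
    fun a => Finset.sum_comm
  simp_rw [h1]
  rw [Finset.sum_comm]
  refine Finset.sum_congr rfl fun c _ => ?_
  have h2 : ∀ a, ∑ b, ∑ d : Fin 2, f a b c d = ∑ d, ∑ b, f a b c d := fun a => Finset.sum_comm
  simp_rw [h2]
  exact Finset.sum_comm

lemma Phi_mem (ψs : ℕ → Fin 2 × Fin 2 → ℂ) (m : ℕ) (p)
    (h1 : p.1 ∈ Kspace ψs (m+1)) (h2 : p.2 ∈ Kspace ψs (m+1)) :
    PhiL ψs m p ∈ Kspace ψs m := by
  intro j h x
  unfold cns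
  have hsn : ∀ (a b a' : Fin 2),
      (Fin.snoc (Function.update (Function.update x ⟨j, Nat.lt_of_succ_lt h⟩ a) ⟨j+1, h⟩ b) a'
        : Fin (m+1) → Fin 2)
      = Function.update (Function.update (Fin.snoc x a')
          ⟨j, by omega⟩ a) ⟨j+1, by omega⟩ b := by
    intro a b a'
    rw [Fin.snoc_update, Fin.snoc_update]
    rfl
  simp only [PhiL_apply, hsn, Finset.mul_sum]
  rw [sum4_comm]
  refine Finset.sum_eq_zero fun a' _ => ?_
  refine Finset.sum_eq_zero fun b' _ => ?_
  by_cases hb : b' = 0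
  · simp only [if_pos hb]
    have hz := h1 j (by omega) (Fin.snoc x a')
    unfold cns at hz
    calc ∑ a : Fin 2, ∑ b : Fin 2, star (ψs j (a,b)) * (star (ψs m (a', b')) *
          p.1 (Function.update (Function.update (Fin.snoc x a') ⟨j, by omega⟩ a) ⟨j+1, by omega⟩ b))
        = star (ψs m (a',b')) * ∑ a : Fin 2, ∑ b : Fin 2, star (ψs j (a,b)) *
          p.1 (Function.update (Function.update (Fin.snoc x a') ⟨j, by omega⟩ a) ⟨j+1, by omega⟩ b) := by
          rw [Finset.mul_sum]
          refine Finset.sum_congr rfl fun a _ => ?_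
          rw [Finset.mul_sum]
          exact Finset.sum_congr rfl fun b _ => by ring
      _ = 0 := by rw [hz, mul_zero]
  · simp only [if_neg hb]
    have hz := h2 j (by omega) (Fin.snoc x a')
    unfold cns at hz
    calc ∑ a : Fin 2, ∑ b : Fin 2, star (ψs j (a,b)) * (star (ψs m (a', b')) *
          p.2 (Function.update (Function.update (Fin.snoc x a') ⟨j, by omega⟩ a) ⟨j+1, by omega⟩ b))
        = star (ψs m (a',b')) * ∑ a : Fin 2, ∑ b : Fin 2, star (ψs j (a,b)) *
          p.2 (Function.update (Function.update (Fin.snoc x a') ⟨j, by omega⟩ a) ⟨j+1, by omega⟩ b) := by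
          rw [Finset.mul_sum]
          refine Finset.sum_congr rfl fun a _ => ?_
          rw [Finset.mul_sum]
          exact Finset.sum_congr rfl fun b _ => by ring
      _ = 0 := by rw [hz, mul_zero]

lemma comb_mem (ψs : ℕ → Fin 2 × Fin 2 → ℂ) (m : ℕ) (p)
    (h1 : p.1 ∈ Kspace ψs (m+1)) (h2 : p.2 ∈ Kspace ψs (m+1))
    (hΦ : PhiL ψs m p = 0) : combL m p ∈ Kspace ψs (m+2) := by
  intro j h x
  unfold cns
  by_cases hj : j + 1 < m + 1
  · -- bulk case
    have key : ∀ a b : Fin 2,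
        combL m p (Function.update (Function.update x ⟨j, Nat.lt_of_succ_lt h⟩ a) ⟨j+1, h⟩ b)
        = if x (Fin.last (m+1)) = 0 then
            p.1 (Function.update (Function.update (Fin.init x) ⟨j, by omega⟩ a) ⟨j+1, by omega⟩ b)
          else
            p.2 (Function.update (Function.update (Fin.init x) ⟨j, by omega⟩ a) ⟨j+1, by omega⟩ b) := by
      intro a b
      rw [combL_apply]
      have e1 : (⟨j, Nat.lt_of_succ_lt h⟩ : Fin (m+2)) = Fin.castSucc ⟨j, by omega⟩ := rfl
      have e2 : (⟨j+1, h⟩ : Fin (m+2)) = Fin.castSucc ⟨j+1, by omega⟩ := rfl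
      rw [e1, e2, Function.update_of_ne (Fin.castSucc_lt_last _).ne',
          Function.update_of_ne (Fin.castSucc_lt_last _).ne',
          Fin.init_update_castSucc, Fin.init_update_castSucc]
    simp only [key]
    by_cases hx : x (Fin.last (m+1)) = 0
    · simp only [if_pos hx]
      exact h1 j hj (Fin.init x)
    · simp only [if_neg hx]
      exact h2 j hj (Fin.init x)
  · -- boundary case : j = m
    have hjm : j = m := by omega
    subst hjm
    have key : ∀ a b : Fin 2,
        combL j p (Function.update (Function.update x ⟨j, Nat.lt_of_succ_lt h⟩ a) ⟨j+1, h⟩ b)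
        = if b = 0 then p.1 (Fin.snoc (Fin.init (Fin.init x)) a)
          else p.2 (Fin.snoc (Fin.init (Fin.init x)) a) := by
      intro a b
      rw [combL_apply]
      have e1 : (⟨j, Nat.lt_of_succ_lt h⟩ : Fin (j+2)) = Fin.castSucc (Fin.last j) := rfl
      have e2 : (⟨j+1, h⟩ : Fin (j+2)) = Fin.last (j+1) := rfl
      rw [e1, e2, Function.update_self, Fin.init_update_last, Fin.init_update_castSucc,
          update_last_eq_snoc]
    simp only [key]
    have hz := congrFun hΦ (Fin.init (Fin.init x))
    rw [PhiL_apply] at hz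
    simpa using hz

lemma Kdim_step (ψs : ℕ → Fin 2 × Fin 2 → ℂ) (m : ℕ) :
    2 * Module.finrank ℂ (Kspace ψs (m+1)) ≤
      Module.finrank ℂ (Kspace ψs (m+2)) + Module.finrank ℂ (Kspace ψs m) := by
  classical
  set K1 := Kspace ψs (m+1) with hK1
  let F : (K1 × K1) →ₗ[ℂ] ((Fin m → Fin 2) → ℂ) :=
    (PhiL ψs m) ∘ₗ ((K1.subtype).prodMap (K1.subtype))
  have hrange : LinearMap.range F ≤ Kspace ψs m := by
    rintro y ⟨p, rfl⟩
    exact Phi_mem ψs m _ p.1.2 p.2.2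
  let Gmap : (LinearMap.ker F) →ₗ[ℂ] ((Fin (m+2) → Fin 2) → ℂ) :=
    (combL m) ∘ₗ ((K1.subtype).prodMap (K1.subtype)) ∘ₗ (LinearMap.ker F).subtype
  have hGmem : ∀ q : LinearMap.ker F, Gmap q ∈ Kspace ψs (m+2) := by
    intro q
    exact comb_mem ψs m _ q.1.1.2 q.1.2.2 (LinearMap.mem_ker.mp q.2)
  let G : (LinearMap.ker F) →ₗ[ℂ] (Kspace ψs (m+2)) :=
    LinearMap.codRestrict (Kspace ψs (m+2)) Gmap hGmem
  have hGinj : Function.Injective G := by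
    intro q q' hqq'
    have hc : combL m ((q : K1 × K1).1.val, (q : K1 × K1).2.val)
        = combL m ((q' : K1 × K1).1.val, (q' : K1 × K1).2.val) := congrArg Subtype.val hqq'
    have he := combL_inj m hc
    have e1 : ((q : K1 × K1)).1.val = ((q' : K1 × K1)).1.val := congrArg Prod.fst he
    have e2 : ((q : K1 × K1)).2.val = ((q' : K1 × K1)).2.val := congrArg Prod.snd he
    exact Subtype.ext (Prod.ext (Subtype.ext e1) (Subtype.ext e2))
  have hker : Module.finrank ℂ (LinearMap.ker F) ≤ Module.finrank ℂ (Kspace ψs (m+2)) :=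
    LinearMap.finrank_le_finrank_of_injective hGinj
  have hrk : Module.finrank ℂ (LinearMap.range F) ≤ Module.finrank ℂ (Kspace ψs m) :=
    Submodule.finrank_mono hrange
  have h3 := LinearMap.finrank_range_add_finrank_ker F
  have h4 : Module.finrank ℂ (K1 × K1) = Module.finrank ℂ K1 + Module.finrank ℂ K1 :=
    Module.finrank_prod
  omega

lemma Kspace_small (ψs : ℕ → Fin 2 × Fin 2 → ℂ) (n : ℕ) (hn : n ≤ 1) :
    Kspace ψs n = ⊤ := by
  rw [eq_top_iff]
  intro v _ j h x
  omega

lemma Kdim_mono (ψs : ℕ → Fin 2 × Fin 2 → ℂ) :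
    ∀ m : ℕ, Module.finrank ℂ (Kspace ψs m) < Module.finrank ℂ (Kspace ψs (m+1)) := by
  intro m
  induction m with
  | zero =>
    rw [Kspace_small ψs 0 (by omega), Kspace_small ψs 1 (by omega), finrank_top, finrank_top]
    rw [Module.finrank_pi ℂ, Module.finrank_pi ℂ]
    simp [Fintype.card_fun]
  | succ k ih =>
    show Module.finrank ℂ (Kspace ψs (k+1)) < Module.finrank ℂ (Kspace ψs (k+2))
    have := Kdim_step ψs k
    omega

/-- **Ground-space dimension is strictly increasing.** With the convention `D₁ = 2`
(`H₁ = 0` on `ℂ²`), one has `D_n > D_{n−1}` for all `n ≥ 2`. -/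
theorem ground_space_dim_increasing (n : ℕ) (hn : 2 ≤ n)
    (ψs : ℕ → Fin 2 × Fin 2 → ℂ)
    (hnorm : ∀ j : ℕ, j + 1 < n → ∑ a, Complex.normSq (ψs j a) = 1) :
    Module.finrank ℂ (LinearMap.ker (HnGen (n - 1) ψs).mulVecLin) <
      Module.finrank ℂ (LinearMap.ker (HnGen n ψs).mulVecLin) := by
  rw [ker_eq_Kspace, ker_eq_Kspace]
  obtain ⟨m, rfl⟩ : ∃ m, n = m + 1 := ⟨n - 1, by omega⟩
  simpa using Kdim_mono ψs m
end
end

section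
/- For every n ≥ 2 and every choice of normalized two-qubit states ψ₁,…,ψ_{n−1}, the Hamiltonian H_n(ψ₁,…,ψ_{n−1}) is frustration-free: its smallest eigenvalue is zero, and the dimension of its kernel 𝒢_n is at least n+1. -/
open scoped BigOperators
open Matrix Polynomial

noncomputable section

/-!
The kernel of `H_n` contains the space `𝒢_n` of vectors annihilated by every bond contraction
`⟨ψ_j|_{j,j+1}`, and `H_n` is positive semidefinite because each of its terms is `Bᴴ B`, where `B`
sums a configuration over the values of the two bond sites with weights `ψ̄`. The dimensions
`d_n = dim 𝒢_n` are convex in `n`: a vector on `n + 2` qubits whose two slices along the last qubit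
lie in `𝒢_{n+1}` is in `𝒢_{n+2}` once its contraction with `ψ_{n+1}` on the last two qubits
vanishes, and that contraction always lies in `𝒢_n`, so rank–nullity gives
`d_{n+2} ≥ 2 d_{n+1} - d_n`. As `d_0 = 1` and `d_1 = 2`, every increment is at least one.
-/

open Function Module
open scoped ComplexOrder

abbrev Qubits (n : ℕ) := (Fin n → Fin 2) → ℂ

section TwoSite

variable {n : ℕ}

def resetPair (i j : Fin n) (x : Fin n → Fin 2) : Fin n → Fin 2 :=
  update (update x i 0) j 0

lemma resetPair_eq_iff {i j : Fin n} {x y : Fin n → Fin 2} :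
    resetPair i j x = resetPair i j y ↔ ∀ k, k ≠ i → k ≠ j → x k = y k := by
  simp only [resetPair, funext_iff, update_apply]
  refine forall_congr' fun k => ?_
  split_ifs <;> tauto

lemma twoSite_vecProj_apply (ψ : Fin 2 × Fin 2 → ℂ) (i j : Fin n) (x y : Fin n → Fin 2) :
    twoSite n (vecProj ψ) i j x y =
      if resetPair i j x = resetPair i j y then ψ (x i, x j) * star (ψ (y i, y j)) else 0 := by
  rw [twoSite, vecProj]
  split_ifs with h
  · rw [Finset.prod_eq_one, mul_one]
    intro k _
    split_ifs <;> simp_all [resetPair_eq_iff]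
  · obtain ⟨k, hki, hkj, hk⟩ : ∃ k, k ≠ i ∧ k ≠ j ∧ x k ≠ y k := by
      simpa [resetPair_eq_iff] using h
    rw [Finset.prod_eq_zero (Finset.mem_univ k) (by simp [hki, hkj, hk]), mul_zero]

lemma posSemidef_twoSite_vecProj (ψ : Fin 2 × Fin 2 → ℂ) (i j : Fin n) :
    (twoSite n (vecProj ψ) i j).PosSemidef := by
  let B : Matrix (Fin n → Fin 2) (Fin n → Fin 2) ℂ :=
    of fun z y => if resetPair i j y = z then star (ψ (y i, y j)) else 0
  have hB : twoSite n (vecProj ψ) i j = Bᴴ * B := by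
    ext x y
    simp [B, twoSite_vecProj_apply, mul_apply, apply_ite star, ite_mul, Finset.sum_ite_eq]
  exact hB ▸ posSemidef_conjTranspose_mul_self B

lemma posSemidef_HnGen (ψs : ℕ → Fin 2 × Fin 2 → ℂ) : (HnGen n ψs).PosSemidef :=
  posSemidef_sum _ fun i _ => by
    split_ifs
    exacts [posSemidef_twoSite_vecProj _ _ _, .zero]

end TwoSite

section Contraction

variable {n : ℕ}

-- `⟨ψ|` on sites `i, j`, kept as a vector on all `n` qubits that does not depend on those sites.
def pairContract (ψ : Fin 2 × Fin 2 → ℂ) (i j : Fin n) : Qubits n →ₗ[ℂ] Qubits n where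
  toFun v x := ∑ p, star (ψ p) * v (update (update x i p.1) j p.2)
  map_add' v w := by ext x; simp [mul_add, Finset.sum_add_distrib]
  map_smul' c v := by ext x; simp [Finset.mul_sum, mul_left_comm]

lemma pairContract_apply (ψ : Fin 2 × Fin 2 → ℂ) (i j : Fin n) (v : Qubits n)
    (x : Fin n → Fin 2) :
    pairContract ψ i j v x = ∑ p, star (ψ p) * v (update (update x i p.1) j p.2) := rfl

lemma update_update_eq_of_resetPair_eq {i j : Fin n} (hij : i ≠ j) {x y : Fin n → Fin 2}
    (h : resetPair i j x = resetPair i j y) : update (update x i (y i)) j (y j) = y := by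
  rw [resetPair_eq_iff] at h
  ext k
  by_cases hkj : k = j
  · simp [hkj]
  by_cases hki : k = i
  · simp [hki, update_of_ne hij]
  simp [update_of_ne hki, update_of_ne hkj, h k hki hkj]

lemma sum_ite_resetPair_eq {i j : Fin n} (hij : i ≠ j) (x : Fin n → Fin 2)
    (f : (Fin n → Fin 2) → ℂ) :
    ∑ y, (if resetPair i j x = resetPair i j y then f y else 0) =
      ∑ p : Fin 2 × Fin 2, f (update (update x i p.1) j p.2) := by
  rw [← Finset.sum_filter]
  refine Finset.sum_nbij' (fun y => (y i, y j)) (fun p => update (update x i p.1) j p.2)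
    (by simp) ?_ ?_ (by simp [update_of_ne hij]) ?_
  · intro p _
    simp only [Finset.mem_filter, Finset.mem_univ, true_and, resetPair_eq_iff]
    intro k hki hkj
    simp [update_of_ne hki, update_of_ne hkj]
  · intro y hy
    exact update_update_eq_of_resetPair_eq hij (Finset.mem_filter.mp hy).2
  · intro y hy
    rw [update_update_eq_of_resetPair_eq hij (Finset.mem_filter.mp hy).2]

lemma twoSite_vecProj_mulVec (ψ : Fin 2 × Fin 2 → ℂ) {i j : Fin n} (hij : i ≠ j) (v : Qubits n) :
    twoSite n (vecProj ψ) i j *ᵥ v = fun x => ψ (x i, x j) * pairContract ψ i j v x := by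
  ext x
  simp only [mulVec, dotProduct, twoSite_vecProj_apply, ite_mul, zero_mul]
  rw [sum_ite_resetPair_eq hij, pairContract_apply, Finset.mul_sum]
  simp [update_of_ne hij, mul_assoc]

end Contraction

section GroundSpace

variable (ψs : ℕ → Fin 2 × Fin 2 → ℂ)

def groundSpace (n : ℕ) : Submodule ℂ (Qubits n) :=
  ⨅ (i : Fin n) (h : (i : ℕ) + 1 < n), LinearMap.ker (pairContract (ψs i) i ⟨i + 1, h⟩)

variable {ψs} in
lemma mem_groundSpace {n : ℕ} {v : Qubits n} :
    v ∈ groundSpace ψs n ↔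
      ∀ (i : Fin n) (h : (i : ℕ) + 1 < n), pairContract (ψs i) i ⟨i + 1, h⟩ v = 0 := by
  simp [groundSpace]

lemma groundSpace_le_ker_HnGen (n : ℕ) :
    groundSpace ψs n ≤ LinearMap.ker (HnGen n ψs).mulVecLin := by
  intro v hv
  rw [LinearMap.mem_ker, mulVecLin_apply, HnGen, sum_mulVec]
  refine Finset.sum_eq_zero fun i _ => ?_
  split_ifs with h
  · rw [twoSite_vecProj_mulVec _ (by simp [Fin.ext_iff]), mem_groundSpace.1 hv i h]
    exact funext fun x => mul_zero _
  · exact zero_mulVec v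

end GroundSpace

section LastSites

variable {n : ℕ}

-- `extendLast S g = g 0 ⊗ |0⟩ + g 1 ⊗ |1⟩`
def extendLast (S : Submodule ℂ (Qubits n)) : (Fin 2 → S) →ₗ[ℂ] Qubits (n + 1) where
  toFun g x := (g (x (Fin.last n)) : Qubits n) (Fin.init x)
  map_add' _ _ := rfl
  map_smul' _ _ := rfl

lemma extendLast_snoc (S : Submodule ℂ (Qubits n)) (g : Fin 2 → S) (y : Fin n → Fin 2)
    (b : Fin 2) : extendLast S g (Fin.snoc y b) = (g b : Qubits n) y := by
  simp [extendLast]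

lemma extendLast_injective (S : Submodule ℂ (Qubits n)) : Injective (extendLast S) := by
  intro g g' h
  ext b y
  simpa only [extendLast_snoc] using congrFun h (Fin.snoc y b)

def contractLast (ψ : Fin 2 × Fin 2 → ℂ) : Qubits (n + 2) →ₗ[ℂ] Qubits n where
  toFun v y := ∑ p, star (ψ p) * v (Fin.snoc (Fin.snoc y p.1) p.2)
  map_add' v w := by ext x; simp [mul_add, Finset.sum_add_distrib]
  map_smul' c v := by ext x; simp [Finset.mul_sum, mul_left_comm]

lemma pairContract_castSucc_snoc (ψ : Fin 2 × Fin 2 → ℂ) (i j : Fin n) (v : Qubits (n + 1))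
    (x : Fin n → Fin 2) (b : Fin 2) :
    pairContract ψ i.castSucc j.castSucc v (Fin.snoc x b) =
      pairContract ψ i j (fun y => v (Fin.snoc y b)) x := by
  simp [pairContract_apply, ← Fin.snoc_update]

lemma pairContract_last_snoc_snoc (ψ : Fin 2 × Fin 2 → ℂ) (v : Qubits (n + 2))
    (y : Fin n → Fin 2) (c d : Fin 2) :
    pairContract ψ (Fin.last n).castSucc (Fin.last (n + 1)) v (Fin.snoc (Fin.snoc y c) d) =
      contractLast ψ v y := by
  simp [pairContract_apply, contractLast, ← Fin.snoc_update, Fin.update_snoc_last]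

lemma pairContract_contractLast (ψ φ : Fin 2 × Fin 2 → ℂ) (i j : Fin n) (v : Qubits (n + 2)) :
    pairContract ψ i j (contractLast φ v) =
      contractLast φ (pairContract ψ i.castSucc.castSucc j.castSucc.castSucc v) := by
  ext y
  simp only [pairContract_apply, contractLast, LinearMap.coe_mk, AddHom.coe_mk, Fin.snoc_update,
    Finset.mul_sum]
  rw [Finset.sum_comm]
  simp only [mul_left_comm]

end LastSites

section Dimension

variable (ψs : ℕ → Fin 2 × Fin 2 → ℂ) {n : ℕ}

lemma pairContract_castSucc_extendLast (g : Fin 2 → groundSpace ψs (n + 1)) (i : Fin (n + 1))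
    (h : (i : ℕ) + 1 < n + 1) :
    pairContract (ψs i) i.castSucc (⟨i + 1, h⟩ : Fin (n + 1)).castSucc
      (extendLast (groundSpace ψs (n + 1)) g) = 0 := by
  ext x
  rw [← Fin.snoc_init_self x, pairContract_castSucc_snoc]
  simp only [extendLast_snoc]
  exact congrFun (mem_groundSpace.1 (g _).2 i h) _

lemma extendLast_mem_groundSpace {g : Fin 2 → groundSpace ψs (n + 1)}
    (hg : contractLast (ψs n) (extendLast (groundSpace ψs (n + 1)) g) = 0) :
    extendLast (groundSpace ψs (n + 1)) g ∈ groundSpace ψs (n + 2) := by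
  rw [mem_groundSpace]
  intro i h
  obtain ⟨i, rfl⟩ : ∃ i' : Fin (n + 1), i = i'.castSucc :=
    (Fin.eq_castSucc_or_eq_last i).resolve_right fun hi => by simp [hi] at h
  by_cases hi : (i : ℕ) + 1 < n + 1
  · exact pairContract_castSucc_extendLast ψs g i hi
  · obtain rfl : i = Fin.last n := Fin.ext (by rw [Fin.val_last]; omega)
    ext x
    rw [← Fin.snoc_init_self x, ← Fin.snoc_init_self (Fin.init x)]
    exact (pairContract_last_snoc_snoc _ _ _ _ _).trans (congrFun hg _)

lemma contractLast_extendLast_mem_groundSpace (g : Fin 2 → groundSpace ψs (n + 1)) :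
    contractLast (ψs n) (extendLast (groundSpace ψs (n + 1)) g) ∈ groundSpace ψs n := by
  rw [mem_groundSpace]
  intro i h
  rw [pairContract_contractLast]
  exact (congrArg _ (pairContract_castSucc_extendLast ψs g i.castSucc (by simp))).trans
    (map_zero _)

lemma two_mul_finrank_groundSpace_le :
    2 * finrank ℂ (groundSpace ψs (n + 1)) ≤
      finrank ℂ (groundSpace ψs (n + 2)) + finrank ℂ (groundSpace ψs n) := by
  set E := extendLast (groundSpace ψs (n + 1))
  set Φ := contractLast (ψs n) ∘ₗ E
  have hrank := Φ.finrank_range_add_finrank_ker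
  rw [finrank_pi_fintype] at hrank
  have hrange : finrank ℂ Φ.range ≤ finrank ℂ (groundSpace ψs n) :=
    Submodule.finrank_mono <| LinearMap.range_le_iff_comap.2 <| eq_top_iff.2 fun g _ =>
      contractLast_extendLast_mem_groundSpace ψs g
  have hker : finrank ℂ Φ.ker ≤ finrank ℂ (groundSpace ψs (n + 2)) :=
    LinearMap.finrank_le_finrank_of_injective
      (f := (E ∘ₗ Φ.ker.subtype).codRestrict _ fun g => extendLast_mem_groundSpace ψs g.2)
      fun g g' h => Subtype.ext (extendLast_injective _ (congrArg Subtype.val h))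
  simp only [Finset.sum_const, Finset.card_univ, Fintype.card_fin, smul_eq_mul] at hrank
  omega

lemma groundSpace_eq_top (hn : n ≤ 1) : groundSpace ψs n = ⊤ :=
  eq_top_iff.2 fun _ _ => mem_groundSpace.2 fun i h => by omega

lemma finrank_groundSpace_lt_succ (n : ℕ) :
    finrank ℂ (groundSpace ψs n) < finrank ℂ (groundSpace ψs (n + 1)) := by
  induction n with
  | zero =>
    rw [groundSpace_eq_top ψs (n := 0) (by omega), groundSpace_eq_top ψs (n := 0 + 1) (by omega),
      finrank_top, finrank_top]
    simp
  | succ n ih =>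
    show _ < finrank ℂ (groundSpace ψs (n + 2))
    have := two_mul_finrank_groundSpace_le ψs (n := n)
    omega

lemma succ_le_finrank_groundSpace (n : ℕ) : n + 1 ≤ finrank ℂ (groundSpace ψs n) := by
  induction n with
  | zero => simp [groundSpace_eq_top]
  | succ n ih => have := finrank_groundSpace_lt_succ ψs n; omega

end Dimension

theorem frustration_free_general (n : ℕ)
    (ψs : ℕ → Fin 2 × Fin 2 → ℂ) :
    (0 : ℂ) ∈ spectrum ℂ (HnGen n ψs) ∧
    (∀ z ∈ spectrum ℂ (HnGen n ψs), 0 ≤ z.re ∧ z.im = 0) ∧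
    n + 1 ≤ Module.finrank ℂ (LinearMap.ker (HnGen n ψs).mulVecLin) := by
  have hdim : n + 1 ≤ finrank ℂ (LinearMap.ker (HnGen n ψs).mulVecLin) :=
    (succ_le_finrank_groundSpace ψs n).trans
      (Submodule.finrank_mono (groundSpace_le_ker_HnGen ψs n))
  refine ⟨?_, fun z hz => ?_, hdim⟩
  · rw [spectrum.zero_mem_iff]
    intro hunit
    have hker : LinearMap.ker (HnGen n ψs).mulVecLin = ⊥ :=
      LinearMap.ker_eq_bot.2 (mulVec_injective_iff_isUnit.2 hunit)
    rw [hker, finrank_bot] at hdim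
    omega
  · have hz := (posSemidef_iff_isHermitian_and_spectrum_nonneg.1 (posSemidef_HnGen ψs)).2 hz
    exact (Complex.nonneg_iff.1 hz).imp_right Eq.symm

/-- **Frustration freeness.** For any normalized two-qubit states `ψ₁, …, ψ_{n−1}`, the
Hamiltonian `H_n(ψ₁,…,ψ_{n−1})` has smallest eigenvalue zero and its kernel has dimension
at least `n+1`. -/
theorem frustration_free (n : ℕ) (hn : 2 ≤ n)
    (ψs : ℕ → Fin 2 × Fin 2 → ℂ)
    (hnorm : ∀ j : ℕ, j + 1 < n → ∑ a, Complex.normSq (ψs j a) = 1) :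
    (0 : ℂ) ∈ spectrum ℂ (HnGen n ψs) ∧
    (∀ z ∈ spectrum ℂ (HnGen n ψs), 0 ≤ z.re ∧ z.im = 0) ∧
    n + 1 ≤ Module.finrank ℂ (LinearMap.ker (HnGen n ψs).mulVecLin) :=
  frustration_free_general n ψs
end
end
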